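/- Let Q = Q(0,1,1), i.e., the tree with center w_0 adjacent to s_1 (where s_1 has one leaf neighbor s'_1) and to t_1 (where t_1 has r_1 ≥ 2 leaf neighbors). Then χ'_s(Q) = n_1(Q) + 1 = r_1 + 2. -/

import Mathlib

open SimpleGraph

variable {V : Type*}

/-- A vertex distinguishing proper edge `k`-coloring (vdec): a proper edge coloring
(edges sharing an endpoint get different colors) such that distinct vertices have
distinct sets of colors on their incident edges. -/
def IsVDEC (G : SimpleGraph V) (k : ℕ) (c : Sym2 V → Fin k) : Prop :=
  (∀ ⦃u v w : V⦄, G.Adj u v → G.Adj u w → v ≠ w → c s(u, v) ≠ c s(u, w)) ∧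
  (∀ u v : V, u ≠ v →
    {i : Fin k | ∃ w, G.Adj u w ∧ c s(u, w) = i} ≠
    {i : Fin k | ∃ w, G.Adj v w ∧ c s(v, w) = i})

/-- `χ'ₛ(G)`: the minimum number of colors in a vdec of `G`. -/
noncomputable def vdecNum (G : SimpleGraph V) : ℕ :=
  sInf {k : ℕ | ∃ c : Sym2 V → Fin k, IsVDEC G k c}

/-- `n_d(G)`: the number of vertices of degree `d` in `G`. -/
noncomputable def numDeg (G : SimpleGraph V) (d : ℕ) : ℕ :=
  Nat.card {v : V // Nat.card (G.neighborSet v) = d}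

/-- Vertex type of the tree `Q(r,m,n)`: the center `w₀`, the leaves `w₁,…,w_r`,
the pairs `sᵢ, s'ᵢ` (encoded as `(i,0)` and `(i,1)`), the vertices `t₁,…,tₙ`,
and the leaves `t'_{i,j}` for `j < rv i`. -/
abbrev QVert (r m n : ℕ) (rv : Fin n → ℕ) : Type :=
  Unit ⊕ Fin r ⊕ (Fin m × Fin 2) ⊕ (Fin n ⊕ Σ i : Fin n, Fin (rv i))

/-- The tree `Q(r,m,n)` of diameter four: the center `w₀` is adjacent to the `r` leaves
`wᵢ`, to the `m` vertices `sᵢ` (each `sᵢ` having one further leaf neighbor `s'ᵢ`),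
and to the `n` vertices `tᵢ`, where `tᵢ` has `rv i` further neighbors, all leaves. -/
def QGraph (r m n : ℕ) (rv : Fin n → ℕ) : SimpleGraph (QVert r m n rv) :=
  SimpleGraph.fromRel (fun a b =>
    (a = Sum.inl () ∧
      ((∃ i, b = Sum.inr (Sum.inl i)) ∨
       (∃ i, b = Sum.inr (Sum.inr (Sum.inl (i, (0 : Fin 2))))) ∨
       (∃ i, b = Sum.inr (Sum.inr (Sum.inr (Sum.inl i)))))) ∨
    (∃ i : Fin m, a = Sum.inr (Sum.inr (Sum.inl (i, (0 : Fin 2)))) ∧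
       b = Sum.inr (Sum.inr (Sum.inl (i, (1 : Fin 2))))) ∨
    (∃ (i : Fin n) (j : Fin (rv i)), a = Sum.inr (Sum.inr (Sum.inr (Sum.inl i))) ∧
       b = Sum.inr (Sum.inr (Sum.inr (Sum.inr ⟨i, j⟩)))))

/-!
Write `r := r₁`. In a vdec of `Q(0,1,1)` the leaf edges `s s'` and `t t'ⱼ` (`j < r`) carry
`r + 1` distinct colors, since a leaf's color set is the singleton of its edge color. The edge
`w₀ t` needs one more color: it differs from the `t t'ⱼ` by properness, and from `s s'` because
otherwise the adjacent degree-two vertices `w₀` and `s` would see the same two colors.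

Conversely, label `w₀, t ↦ 0`, `s ↦ 1`, `t'ⱼ ↦ j + 1`, `s' ↦ r + 1` and color each edge by the
larger label of its ends. The color sets are `{0, 1}`, `{0, …, r}`, `{1, r + 1}`, `{j + 1}`,
`{r + 1}`; in a proper coloring they have the size of the degree, so only vertices of equal degree
have to be compared, and for `r ≥ 2` the only such pairs are `w₀, s` and the leaves.
-/

namespace SimpleGraph

variable {G : SimpleGraph V} {k : ℕ} {c : Sym2 V → Fin k}

def incidentColors (G : SimpleGraph V) (c : Sym2 V → Fin k) (u : V) : Set (Fin k) :=
  (fun w => c s(u, w)) '' G.neighborSet u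

theorem ncard_incidentColors {u : V} (h : Set.InjOn (fun w => c s(u, w)) (G.neighborSet u)) :
    (G.incidentColors c u).ncard = Nat.card (G.neighborSet u) := by
  rw [incidentColors, h.ncard_image, Nat.card_coe_set_eq]

theorem incidentColors_of_neighborSet_eq_pair {u a b : V} (h : G.neighborSet u = {a, b}) :
    G.incidentColors c u = {c s(u, a), c s(u, b)} := by
  rw [incidentColors, h, Set.image_pair]

theorem incidentColors_of_neighborSet_eq_singleton {u a : V} (h : G.neighborSet u = {a}) :
    G.incidentColors c u = {c s(u, a)} := by
  rw [incidentColors, h, Set.image_singleton]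

end SimpleGraph

section

variable {G : SimpleGraph V} {k : ℕ} {c : Sym2 V → Fin k}

theorem isVDEC_iff : IsVDEC G k c ↔
    (∀ u, Set.InjOn (fun w => c s(u, w)) (G.neighborSet u)) ∧
      Function.Injective (G.incidentColors c) := by
  refine and_congr ⟨fun h u v hv w hw hvw => ?_, fun h u v w hv hw hvw => ?_⟩
    ⟨fun h u v huv => ?_, fun h u v huv => ?_⟩
  · by_contra hne; exact h hv hw hne hvw
  · exact hvw ∘ h u hv hw
  · by_contra hne; exact h u v hne huv
  · exact huv ∘ @h u v

theorem IsVDEC.color_ne_of_neighborSet_eq_singleton (hc : IsVDEC G k c) {u v a b : V}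
    (huv : u ≠ v) (hu : G.neighborSet u = {a}) (hv : G.neighborSet v = {b}) :
    c s(u, a) ≠ c s(v, b) := fun h => huv <| isVDEC_iff.1 hc |>.2 <| by
  rw [incidentColors_of_neighborSet_eq_singleton hu,
    incidentColors_of_neighborSet_eq_singleton hv, h]

theorem IsVDEC.color_ne_of_neighborSet_eq_pair (hc : IsVDEC G k c) {u v a b : V}
    (hu : G.neighborSet u = {v, a}) (hv : G.neighborSet v = {u, b}) :
    c s(u, a) ≠ c s(v, b) := fun h => by
  have huv : G.Adj u v := by simp [← mem_neighborSet, hu]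
  refine huv.ne <| isVDEC_iff.1 hc |>.2 ?_
  rw [incidentColors_of_neighborSet_eq_pair hu, incidentColors_of_neighborSet_eq_pair hv, h,
    Sym2.eq_swap]

theorem vdecNum_eq (hk : ∃ c : Sym2 V → Fin k, IsVDEC G k c)
    (hle : ∀ k' (c : Sym2 V → Fin k'), IsVDEC G k' c → k ≤ k') : vdecNum G = k :=
  le_antisymm (Nat.sInf_le hk) (le_csInf ⟨k, hk⟩ fun _ ⟨c, hc⟩ => hle _ c hc)

end

namespace QGraph

variable {rv : Fin 1 → ℕ}

def w₀ : QVert 0 1 1 rv := Sum.inl ()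
def s : QVert 0 1 1 rv := Sum.inr (Sum.inr (Sum.inl (0, 0)))
def s' : QVert 0 1 1 rv := Sum.inr (Sum.inr (Sum.inl (0, 1)))
def t : QVert 0 1 1 rv := Sum.inr (Sum.inr (Sum.inr (Sum.inl 0)))
def t' (j : Fin (rv 0)) : QVert 0 1 1 rv := Sum.inr (Sum.inr (Sum.inr (Sum.inr ⟨0, j⟩)))

theorem vertex_cases (v : QVert 0 1 1 rv) : v = w₀ ∨ v = s ∨ v = s' ∨ v = t ∨ ∃ j, v = t' j := by
  rcases v with ⟨⟩ | i | ⟨i, b⟩ | i | ⟨i, j⟩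
  · exact .inl rfl
  · exact i.elim0
  all_goals obtain rfl := Fin.fin_one_eq_zero i
  · fin_cases b
    exacts [.inr <| .inl rfl, .inr <| .inr <| .inl rfl]
  · exact .inr <| .inr <| .inr <| .inl rfl
  · exact .inr <| .inr <| .inr <| .inr ⟨j, rfl⟩

theorem neighborSet_w₀ : (QGraph 0 1 1 rv).neighborSet w₀ = {s, t} := by
  ext v
  rcases vertex_cases v with rfl | rfl | rfl | rfl | ⟨j, rfl⟩ <;> simp [QGraph, w₀, s, s', t, t']

theorem neighborSet_s : (QGraph 0 1 1 rv).neighborSet s = {w₀, s'} := by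
  ext v
  rcases vertex_cases v with rfl | rfl | rfl | rfl | ⟨j, rfl⟩ <;> simp [QGraph, w₀, s, s', t, t']

theorem neighborSet_s' : (QGraph 0 1 1 rv).neighborSet s' = {s} := by
  ext v
  rcases vertex_cases v with rfl | rfl | rfl | rfl | ⟨j, rfl⟩ <;> simp [QGraph, w₀, s, s', t, t']

theorem neighborSet_t : (QGraph 0 1 1 rv).neighborSet t = insert w₀ (Set.range t') := by
  ext v
  rcases vertex_cases v with rfl | rfl | rfl | rfl | ⟨j, rfl⟩ <;> simp [QGraph, w₀, s, s', t, t']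

theorem neighborSet_t' (j : Fin (rv 0)) : (QGraph 0 1 1 rv).neighborSet (t' j) = {t} := by
  ext v
  rcases vertex_cases v with rfl | rfl | rfl | rfl | ⟨j, rfl⟩ <;> simp [QGraph, w₀, s, s', t, t']

theorem t'_injective : Function.Injective (t' (rv := rv)) := fun _ _ h => by simpa [t'] using h

theorem card_neighborSet_w₀ : Nat.card ((QGraph 0 1 1 rv).neighborSet w₀) = 2 := by
  rw [neighborSet_w₀, Nat.card_coe_set_eq, Set.ncard_pair (by simp [s, t])]

theorem card_neighborSet_s : Nat.card ((QGraph 0 1 1 rv).neighborSet s) = 2 := by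
  rw [neighborSet_s, Nat.card_coe_set_eq, Set.ncard_pair (by simp [w₀, s'])]

theorem card_neighborSet_s' : Nat.card ((QGraph 0 1 1 rv).neighborSet s') = 1 := by
  rw [neighborSet_s', Nat.card_coe_set_eq, Set.ncard_singleton]

theorem card_neighborSet_t : Nat.card ((QGraph 0 1 1 rv).neighborSet t) = rv 0 + 1 := by
  rw [neighborSet_t, Nat.card_coe_set_eq, Set.ncard_insert_of_notMem (by simp [w₀, t']),
    Set.ncard_range_of_injective t'_injective, Nat.card_fin]

theorem card_neighborSet_t' (j : Fin (rv 0)) :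
    Nat.card ((QGraph 0 1 1 rv).neighborSet (t' j)) = 1 := by
  rw [neighborSet_t', Nat.card_coe_set_eq, Set.ncard_singleton]

theorem numDeg_one (h : rv 0 ≠ 0) : numDeg (QGraph 0 1 1 rv) 1 = rv 0 + 1 := by
  have : {v | Nat.card ((QGraph 0 1 1 rv).neighborSet v) = 1} = insert s' (Set.range t') := by
    ext v
    rcases vertex_cases v with rfl | rfl | rfl | rfl | ⟨j, rfl⟩ <;>
      simp only [Set.mem_ofPred_eq, card_neighborSet_w₀, card_neighborSet_s, card_neighborSet_s',
        card_neighborSet_t, card_neighborSet_t'] <;>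
      simp [h, w₀, s, s', t, t']
  rw [numDeg, ← Set.coe_ofPred, Nat.card_coe_set_eq, this,
    Set.ncard_insert_of_notMem (by simp [s', t']),
    Set.ncard_range_of_injective t'_injective, Nat.card_fin]

def label : QVert 0 1 1 rv → Fin (rv 0 + 2)
  | Sum.inl _ => 0
  | Sum.inr (Sum.inl i) => i.elim0
  | Sum.inr (Sum.inr (Sum.inl (_, b))) => if b = 0 then 1 else (Fin.last _).succ
  | Sum.inr (Sum.inr (Sum.inr (Sum.inl _))) => 0
  | Sum.inr (Sum.inr (Sum.inr (Sum.inr ⟨i, j⟩))) =>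
      (j.cast (by rw [Fin.fin_one_eq_zero i])).castSucc.succ

@[simp] theorem label_w₀ : label (w₀ (rv := rv)) = 0 := rfl
@[simp] theorem label_s : label (s (rv := rv)) = 1 := rfl
@[simp] theorem label_s' : label (s' (rv := rv)) = (Fin.last _).succ := rfl
@[simp] theorem label_t : label (t (rv := rv)) = 0 := rfl
@[simp] theorem label_t' (j : Fin (rv 0)) : label (t' j) = j.castSucc.succ := rfl

def color : Sym2 (QVert 0 1 1 rv) → Fin (rv 0 + 2) :=
  Sym2.lift ⟨fun u v => max (label u) (label v), fun _ _ => max_comm _ _⟩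

@[simp] theorem color_mk (u v : QVert 0 1 1 rv) : color s(u, v) = max (label u) (label v) := rfl

theorem color_injOn_neighborSet (hr : rv 0 ≠ 0) (u : QVert 0 1 1 rv) :
    Set.InjOn (fun w => color s(u, w)) ((QGraph 0 1 1 rv).neighborSet u) := by
  rcases vertex_cases u with rfl | rfl | rfl | rfl | ⟨j, rfl⟩
  · simp [neighborSet_w₀]
  · simp [neighborSet_s, Fin.ext_iff, hr]
  · simp [neighborSet_s']
  · rw [neighborSet_t, Set.injOn_insert (by simp [w₀, t'])]
    refine ⟨Function.Injective.injOn_range fun i j h => by simpa using h, by simp⟩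
  · simp [neighborSet_t']

theorem incidentColors_w₀ : (QGraph 0 1 1 rv).incidentColors color w₀ = {1, 0} := by
  simp [incidentColors_of_neighborSet_eq_pair neighborSet_w₀]

theorem incidentColors_s : (QGraph 0 1 1 rv).incidentColors color s = {1, (Fin.last _).succ} := by
  simp [incidentColors_of_neighborSet_eq_pair neighborSet_s, Fin.le_last]

theorem incidentColors_s' : (QGraph 0 1 1 rv).incidentColors color s' = {(Fin.last _).succ} := by
  simp [incidentColors_of_neighborSet_eq_singleton neighborSet_s', Fin.le_last]

theorem incidentColors_t' (j : Fin (rv 0)) :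
    (QGraph 0 1 1 rv).incidentColors color (t' j) = {j.castSucc.succ} := by
  simp [incidentColors_of_neighborSet_eq_singleton (neighborSet_t' j)]

theorem incidentColors_injective (hr : 2 ≤ rv 0) :
    Function.Injective ((QGraph 0 1 1 rv).incidentColors color) := by
  intro u v h
  have hdeg : Nat.card ((QGraph 0 1 1 rv).neighborSet u) =
      Nat.card ((QGraph 0 1 1 rv).neighborSet v) := by
    rw [← ncard_incidentColors (color_injOn_neighborSet (by omega) u),
      ← ncard_incidentColors (color_injOn_neighborSet (by omega) v), h]
  rcases vertex_cases u with rfl | rfl | rfl | rfl | ⟨j, rfl⟩ <;>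
    rcases vertex_cases v with rfl | rfl | rfl | rfl | ⟨j', rfl⟩ <;>
    simp only [card_neighborSet_w₀, card_neighborSet_s, card_neighborSet_s',
        card_neighborSet_t, card_neighborSet_t', incidentColors_w₀, incidentColors_s,
        incidentColors_s', incidentColors_t'] at hdeg h <;>
    simp_all [Set.pair_eq_pair_iff, eq_comm (a := Fin.last _)]

theorem isVDEC_color (hr : 2 ≤ rv 0) : IsVDEC (QGraph 0 1 1 rv) (rv 0 + 2) color :=
  isVDEC_iff.2 ⟨color_injOn_neighborSet (by omega), incidentColors_injective hr⟩

theorem add_two_le_of_isVDEC {k : ℕ} {c : Sym2 (QVert 0 1 1 rv) → Fin k}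
    (hc : IsVDEC (QGraph 0 1 1 rv) k c) : rv 0 + 2 ≤ k := by
  have leaf_inj : Function.Injective fun j => c s(t' j, t) := fun i j h => by
    by_contra hij
    exact hc.color_ne_of_neighborSet_eq_singleton (t'_injective.ne hij) (neighborSet_t' i)
      (neighborSet_t' j) h
  have s'_notMem : c s(s', s) ∉ Set.range fun j => c s(t' j, t) := by
    rintro ⟨j, hj⟩
    exact hc.color_ne_of_neighborSet_eq_singleton (by simp [s', t']) (neighborSet_t' j)
      neighborSet_s' hj
  have w₀t_ne_s's : c s(w₀, t) ≠ c s(s', s) := by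
    rw [Sym2.eq_swap (a := s')]
    exact hc.color_ne_of_neighborSet_eq_pair neighborSet_w₀ neighborSet_s
  have leaf_ne_w₀t (j : Fin (rv 0)) : c s(t' j, t) ≠ c s(w₀, t) := by
    rw [Sym2.eq_swap, Sym2.eq_swap (a := w₀)]
    exact (isVDEC_iff.1 hc).1 t |>.ne (by simp [neighborSet_t]) (by simp [neighborSet_t])
      (by simp [w₀, t'])
  have hinj : Function.Injective
      (Fin.cons (c s(w₀, t)) (Fin.cons (c s(s', s)) fun j => c s(t' j, t)) :
        Fin (rv 0 + 2) → Fin k) :=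
    Fin.cons_injective_iff.2 ⟨by simpa [w₀t_ne_s's] using leaf_ne_w₀t,
      Fin.cons_injective_iff.2 ⟨s'_notMem, leaf_inj⟩⟩
  simpa only [Fintype.card_fin] using Fintype.card_le_of_injective _ hinj

end QGraph

/-- For `Q = Q(0,1,1)` (center `w₀` adjacent to `s₁`, which has one leaf
neighbor `s'₁`, and to `t₁`, which has `r₁ ≥ 2` leaf neighbors),
`χ'ₛ(Q) = n₁(Q) + 1 = r₁ + 2`. -/
theorem vdecNum_QGraph_011 (rv : Fin 1 → ℕ) (hrv : 2 ≤ rv 0) :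
    vdecNum (QGraph 0 1 1 rv) = numDeg (QGraph 0 1 1 rv) 1 + 1 ∧
    numDeg (QGraph 0 1 1 rv) 1 + 1 = rv 0 + 2 := by
  rw [QGraph.numDeg_one (by omega)]
  exact ⟨vdecNum_eq ⟨_, QGraph.isVDEC_color hrv⟩ fun _ _ => QGraph.add_two_le_of_isVDEC, rfl⟩
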